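/- arXiv:1103.6061 — 3 statements merged into one kernel-verified Lean document; each statement's English description precedes it below -/
import Mathlib

section
/- Let Ẑ := ∏_p ℤ_p be the product of the rings of p-adic integers over all prime numbers p, and let ι : ℤ → Ẑ be the diagonal embedding x ↦ (x, x, x, …). Then the quotient abelian group Ẑ / ι(ℤ) is divisible: for every integer n > 0 and every class c ∈ Ẑ/ι(ℤ) there exists a class d ∈ Ẑ/ι(ℤ) with n • d = c. -/
instance (p : Nat.Primes) : Fact (p : ℕ).Prime := ⟨p.2⟩

/-- The diagonal embedding of `ℤ` into `Ẑ = ∏_p ℤ_p`, `x ↦ (x, x, x, …)`. -/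
noncomputable def zhatDiagonal : ℤ →+ (∀ p : Nat.Primes, ℤ_[(p : ℕ)]) where
  toFun x := fun p => (x : ℤ_[(p : ℕ)])
  map_zero' := by funext p; simp
  map_add' a b := by funext p; push_cast; rfl

/-!
Divisibility of `Ẑ/ℤ` reduces to divisibility by primes. For a prime `q` and `x ∈ Ẑ`, pick an
integer `m` with `x_q ≡ m (mod q)`; then `q ∣ x_p - m` in every `ℤ_p`: for `p = q` by the choice
of `m`, and for `p ≠ q` because `q` is a unit in `ℤ_p`. Hence `x ≡ q • y` modulo `ι(ℤ)`.
-/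

theorem AddMonoid.nsmul_surjective_of_forall_prime {M : Type*} [AddMonoid M]
    (h : ∀ q : ℕ, q.Prime → Function.Surjective fun x : M => q • x) {n : ℕ} (hn : n ≠ 0) :
    Function.Surjective fun x : M => n • x := by
  induction n using induction_on_primes with
  | zero => exact absurd rfl hn
  | one => exact fun x => ⟨x, one_nsmul x⟩
  | prime_mul q a hq ih =>
    simpa only [Function.comp_def, ← mul_nsmul'] using
      (h q hq).comp (ih (right_ne_zero_of_mul hn))

namespace PadicInt

variable {p : ℕ} [Fact p.Prime]

theorem isUnit_natCast_of_prime_ne {q : ℕ} (hq : q.Prime) (hpq : p ≠ q) : IsUnit (q : ℤ_[p]) :=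
  isUnit_iff.mpr <| norm_natCast_eq_one_iff.mpr <|
    (Nat.coprime_primes Fact.out hq).mpr hpq

theorem prime_dvd_sub_zmodRepr (x : ℤ_[p]) : (p : ℤ_[p]) ∣ x - x.zmodRepr :=
  Ideal.mem_span_singleton.mp (maximalIdeal_eq_span_p (p := p) ▸ sub_zmodRepr_mem x)

end PadicInt

theorem exists_sub_prime_nsmul_mem_range_zhatDiagonal (q : Nat.Primes)
    (x : ∀ p : Nat.Primes, ℤ_[(p : ℕ)]) : ∃ y, x - (q : ℕ) • y ∈ zhatDiagonal.range := by
  set m : ℕ := (x q).zmodRepr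
  have hdvd : ∀ p : Nat.Primes, ((q : ℕ) : ℤ_[(p : ℕ)]) ∣ x p - m := by
    intro p
    by_cases hpq : p = q
    · subst hpq
      exact PadicInt.prime_dvd_sub_zmodRepr _
    · exact PadicInt.isUnit_natCast_of_prime_ne q.2 (hpq <| Subtype.ext ·) |>.dvd
  choose y hy using hdvd
  refine ⟨y, m, funext fun p => ?_⟩
  change ((m : ℤ) : ℤ_[(p : ℕ)]) = x p - (q : ℕ) • y p
  rw [Int.cast_natCast, nsmul_eq_mul, ← hy, sub_sub_cancel]

/-- The quotient `Ẑ/ℤ` of the product of all rings of `p`-adic integers by the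
diagonally embedded copy of `ℤ` is a divisible abelian group. -/
theorem zhat_quotient_int_divisible :
    ∀ n : ℤ, 0 < n → ∀ c : (∀ p : Nat.Primes, ℤ_[(p : ℕ)]) ⧸ zhatDiagonal.range,
      ∃ d : (∀ p : Nat.Primes, ℤ_[(p : ℕ)]) ⧸ zhatDiagonal.range, n • d = c := by
  intro n hn c
  lift n to ℕ using hn.le
  have hprime : ∀ q : ℕ, q.Prime → Function.Surjective
      fun d : (∀ p : Nat.Primes, ℤ_[(p : ℕ)]) ⧸ zhatDiagonal.range => q • d := by
    intro q hq c
    obtain ⟨x, rfl⟩ := QuotientAddGroup.mk_surjective c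
    obtain ⟨y, hy⟩ := exists_sub_prime_nsmul_mem_range_zhatDiagonal ⟨q, hq⟩ x
    exact ⟨y, ((QuotientAddGroup.eq_iff_sub_mem).mpr hy).symm⟩
  obtain ⟨d, hd⟩ := AddMonoid.nsmul_surjective_of_forall_prime hprime (Int.natCast_pos.mp hn).ne' c
  exact ⟨d, by rw [natCast_zsmul]; exact hd⟩
end

section
/- Let ℓ be a prime number, let M be a finitely generated module over the ring ℤ_ℓ of ℓ-adic integers, and let φ : M → M be a ℤ_ℓ-linear endomorphism such that the induced ℚ_ℓ-linear endomorphism φ_ℚ of the vector space ℚ_ℓ ⊗_{ℤ_ℓ} M satisfies ker(φ_ℚ − id) = 0. Then the subgroup of φ-fixed points of the quotient (ℚ_ℓ ⊗_{ℤ_ℓ} M) / M (where M is embedded via x ↦ 1 ⊗ x) is finite; in particular it contains no nonzero divisible element. -/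
open TensorProduct

/-- The embedding `M → ℚ_ℓ ⊗_{ℤ_ℓ} M`, `x ↦ 1 ⊗ x`. -/
noncomputable def padicTensorUnit (ℓ : ℕ) [Fact ℓ.Prime] (M : Type)
    [AddCommGroup M] [Module ℤ_[ℓ] M] :
    M →ₗ[ℤ_[ℓ]] ℚ_[ℓ] ⊗[ℤ_[ℓ]] M :=
  TensorProduct.mk ℤ_[ℓ] ℚ_[ℓ] M 1

/-- The endomorphism of `(ℚ_ℓ ⊗_{ℤ_ℓ} M)/M` induced by a `ℤ_ℓ`-linear
endomorphism `φ` of `M` (via its base change `φ_ℚ` to `ℚ_ℓ ⊗_{ℤ_ℓ} M`). -/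
noncomputable def padicQuotEndo (ℓ : ℕ) [Fact ℓ.Prime] (M : Type)
    [AddCommGroup M] [Module ℤ_[ℓ] M] (φ : M →ₗ[ℤ_[ℓ]] M) :
    ((ℚ_[ℓ] ⊗[ℤ_[ℓ]] M) ⧸ LinearMap.range (padicTensorUnit ℓ M)) →ₗ[ℤ_[ℓ]]
      ((ℚ_[ℓ] ⊗[ℤ_[ℓ]] M) ⧸ LinearMap.range (padicTensorUnit ℓ M)) :=
  Submodule.mapQ _ _ ((φ.baseChange ℚ_[ℓ]).restrictScalars ℤ_[ℓ]) (by
    rintro _ ⟨x, rfl⟩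
    exact ⟨φ x, by simp [padicTensorUnit]⟩)

lemma aux_finite_of_fg_tors (ℓ : ℕ) [Fact ℓ.Prime] (P : Type*) [AddCommGroup P]
    [Module ℤ_[ℓ] P] [Module.Finite ℤ_[ℓ] P] (K : ℕ)
    (h : ∀ x : P, ((ℓ : ℤ_[ℓ]) ^ K) • x = 0) : Finite P := by
  set I : Ideal ℤ_[ℓ] := Ideal.span {(ℓ : ℤ_[ℓ]) ^ K} with hI
  have hT : Module.IsTorsionBySet ℤ_[ℓ] P I := by
    rw [hI, ← Ideal.submodule_span_eq]
    exact (Module.isTorsionBySet_span_singleton_iff _).mpr h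
  letI := hT.module
  haveI : IsScalarTower ℤ_[ℓ] (ℤ_[ℓ] ⧸ I) P := hT.isScalarTower
  haveI : Module.Finite (ℤ_[ℓ] ⧸ I) P :=
    Module.Finite.of_restrictScalars_finite ℤ_[ℓ] _ _
  haveI : Finite (ℤ_[ℓ] ⧸ I) := by
    have hk : I = RingHom.ker (PadicInt.toZModPow (p := ℓ) K) :=
      (PadicInt.ker_toZModPow K).symm
    let e := RingHom.quotientKerEquivOfSurjective
      (ZMod.ringHom_surjective (PadicInt.toZModPow (p := ℓ) K))
    haveI : NeZero (ℓ ^ K) := ⟨pow_ne_zero _ (Fact.out : ℓ.Prime).ne_zero⟩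
    have : Finite (ℤ_[ℓ] ⧸ RingHom.ker (PadicInt.toZModPow (p := ℓ) K)) :=
      Finite.of_equiv _ e.symm.toEquiv
    rwa [hk]
  exact Module.finite_of_finite (ℤ_[ℓ] ⧸ I)

/-- Let `M` be a finitely generated `ℤ_ℓ`-module and `φ : M → M` a `ℤ_ℓ`-linear
endomorphism whose base change `φ_ℚ` to `ℚ_ℓ ⊗ M` satisfies
`ker (φ_ℚ - id) = 0`.  Then the subgroup of `φ`-fixed points of the quotient
`(ℚ_ℓ ⊗ M)/M` is finite; in particular it contains no nonzero divisible
element. -/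
theorem padic_quot_fixed_points_finite (ℓ : ℕ) [Fact ℓ.Prime]
    (M : Type) [AddCommGroup M] [Module ℤ_[ℓ] M] [Module.Finite ℤ_[ℓ] M]
    (φ : M →ₗ[ℤ_[ℓ]] M)
    (hφ : LinearMap.ker (φ.baseChange ℚ_[ℓ] - LinearMap.id) = ⊥) :
    Finite {c : (ℚ_[ℓ] ⊗[ℤ_[ℓ]] M) ⧸ LinearMap.range (padicTensorUnit ℓ M) //
        padicQuotEndo ℓ M φ c = c} ∧
    ∀ c : (ℚ_[ℓ] ⊗[ℤ_[ℓ]] M) ⧸ LinearMap.range (padicTensorUnit ℓ M),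
      padicQuotEndo ℓ M φ c = c →
      (∀ n : ℤ, 0 < n → ∃ d, padicQuotEndo ℓ M φ d = d ∧ n • d = c) →
      c = 0 := by
  set N := LinearMap.range (padicTensorUnit ℓ M) with hN
  set ψ : (ℚ_[ℓ] ⊗[ℤ_[ℓ]] M) →ₗ[ℚ_[ℓ]] (ℚ_[ℓ] ⊗[ℤ_[ℓ]] M) :=
    φ.baseChange ℚ_[ℓ] - LinearMap.id with hψ
  -- ψ is bijective
  have hinj : Function.Injective ψ := LinearMap.ker_eq_bot.mp hφ
  have hsurj : Function.Surjective ψ := LinearMap.injective_iff_surjective.mp hinj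
  let e : (ℚ_[ℓ] ⊗[ℤ_[ℓ]] M) ≃ₗ[ℚ_[ℓ]] (ℚ_[ℓ] ⊗[ℤ_[ℓ]] M) :=
    LinearEquiv.ofBijective ψ ⟨hinj, hsurj⟩
  -- every element has an ℓ-power multiple in N
  have hC : ∀ v : ℚ_[ℓ] ⊗[ℤ_[ℓ]] M, ∃ k : ℕ, ((ℓ : ℤ_[ℓ]) ^ k) • v ∈ N := by
    intro v
    induction v with
    | zero => exact ⟨0, by simp⟩
    | tmul q m =>
      have hp1 : (1 : ℝ) < (ℓ : ℝ) := by
        exact_mod_cast (Fact.out : ℓ.Prime).one_lt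
      obtain ⟨k, hk⟩ : ∃ k : ℕ, ‖(ℓ : ℚ_[ℓ]) ^ k * q‖ ≤ 1 := by
        rcases eq_or_ne q 0 with rfl | hq
        · exact ⟨0, by simp⟩
        · have hlt1 : (ℓ : ℝ)⁻¹ < 1 := by
            rw [inv_lt_one₀ (lt_trans zero_lt_one hp1)]; exact hp1
          have hq' : 0 < ‖q‖ := norm_pos_iff.mpr hq
          obtain ⟨k, hk⟩ := exists_pow_lt_of_lt_one
            (x := ‖q‖⁻¹) (y := (ℓ : ℝ)⁻¹) (inv_pos.mpr hq') hlt1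
          refine ⟨k, ?_⟩
          rw [norm_mul, norm_pow, Padic.norm_p]
          calc ((ℓ : ℝ))⁻¹ ^ k * ‖q‖ ≤ ‖q‖⁻¹ * ‖q‖ := by
                exact mul_le_mul_of_nonneg_right hk.le hq'.le
            _ = 1 := inv_mul_cancel₀ hq'.ne'
      obtain ⟨z, hz⟩ : ∃ z : ℤ_[ℓ], (z : ℚ_[ℓ]) = (ℓ : ℚ_[ℓ]) ^ k * q :=
        ⟨⟨_, hk⟩, rfl⟩
      refine ⟨k, ⟨z • m, ?_⟩⟩
      show (1 : ℚ_[ℓ]) ⊗ₜ[ℤ_[ℓ]] (z • m) = ((ℓ : ℤ_[ℓ]) ^ k) • (q ⊗ₜ[ℤ_[ℓ]] m)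
      rw [TensorProduct.tmul_smul, TensorProduct.smul_tmul', TensorProduct.smul_tmul']
      congr 1
      rw [Algebra.smul_def, Algebra.smul_def, mul_one]
      rw [show (algebraMap ℤ_[ℓ] ℚ_[ℓ]) z = (z : ℚ_[ℓ]) from rfl, hz]
      push_cast
      ring
    | add v w hv hw =>
      obtain ⟨k₁, h₁⟩ := hv
      obtain ⟨k₂, h₂⟩ := hw
      refine ⟨max k₁ k₂, ?_⟩
      rw [smul_add]
      have bump : ∀ (x : ℚ_[ℓ] ⊗[ℤ_[ℓ]] M) (a b : ℕ), a ≤ b →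
          ((ℓ : ℤ_[ℓ]) ^ a) • x ∈ N → ((ℓ : ℤ_[ℓ]) ^ b) • x ∈ N := by
        intro x a b hab hx
        have := N.smul_mem ((ℓ : ℤ_[ℓ]) ^ (b - a)) hx
        rwa [smul_smul, ← pow_add, Nat.sub_add_cancel hab] at this
      exact N.add_mem (bump v k₁ _ (le_max_left _ _) h₁)
        (bump w k₂ _ (le_max_right _ _) h₂)
  -- the lattice L := e.symm '' N
  let A : (ℚ_[ℓ] ⊗[ℤ_[ℓ]] M) →ₗ[ℤ_[ℓ]] (ℚ_[ℓ] ⊗[ℤ_[ℓ]] M) :=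
    (e.symm.toLinearMap).restrictScalars ℤ_[ℓ]
  let L : Submodule ℤ_[ℓ] (ℚ_[ℓ] ⊗[ℤ_[ℓ]] M) := N.map A
  have hNfg : N.FG := by
    rw [hN, LinearMap.range_eq_map]
    exact Submodule.FG.map _ (Module.finite_def.mp inferInstance)
  have hLfg : L.FG := hNfg.map A
  obtain ⟨s, hs⟩ := id hLfg
  -- uniform power K killing L modulo N
  choose kf hkf using hC
  set K : ℕ := s.sup kf with hK
  have bump : ∀ (x : ℚ_[ℓ] ⊗[ℤ_[ℓ]] M) (a b : ℕ), a ≤ b →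
      ((ℓ : ℤ_[ℓ]) ^ a) • x ∈ N → ((ℓ : ℤ_[ℓ]) ^ b) • x ∈ N := by
    intro x a b hab hx
    have := N.smul_mem ((ℓ : ℤ_[ℓ]) ^ (b - a)) hx
    rwa [smul_smul, ← pow_add, Nat.sub_add_cancel hab] at this
  have hLN : ∀ v ∈ L, ((ℓ : ℤ_[ℓ]) ^ K) • v ∈ N := by
    have : L ≤ N.comap (((ℓ : ℤ_[ℓ]) ^ K) • (LinearMap.id :
        (ℚ_[ℓ] ⊗[ℤ_[ℓ]] M) →ₗ[ℤ_[ℓ]] (ℚ_[ℓ] ⊗[ℤ_[ℓ]] M))) := by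
      rw [← hs, Submodule.span_le]
      intro x hx
      exact bump x (kf x) K (Finset.le_sup hx) (hkf x)
    intro v hv
    exact this hv
  -- fixed points lie in the image of L
  have hfix : ∀ c, padicQuotEndo ℓ M φ c = c → c ∈ L.map N.mkQ := by
    intro c hc
    obtain ⟨v, rfl⟩ := N.mkQ_surjective c
    have hv : ψ v ∈ N := by
      have h1 : padicQuotEndo ℓ M φ (N.mkQ v) = N.mkQ (φ.baseChange ℚ_[ℓ] v) := by
        simp [padicQuotEndo, Submodule.mapQ_apply]
      rw [h1] at hc
      have h2 : N.mkQ (ψ v) = 0 := by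
        rw [hψ]
        simp only [LinearMap.sub_apply, LinearMap.id_apply, map_sub]
        rw [hc, sub_self]
      rwa [Submodule.mkQ_apply, Submodule.Quotient.mk_eq_zero] at h2
    have hvL : v ∈ L := by
      refine ⟨ψ v, hv, ?_⟩
      show e.symm (ψ v) = v
      have : ψ v = e v := rfl
      rw [this, LinearEquiv.symm_apply_apply]
    exact ⟨v, hvL, rfl⟩
  -- the image of L is finite
  haveI : Module.Finite ℤ_[ℓ] L := Module.Finite.iff_fg.mpr hLfg
  haveI : Module.Finite ℤ_[ℓ] (L.map N.mkQ) := Module.Finite.map L N.mkQ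
  haveI hPfin : Finite (L.map N.mkQ) := by
    refine aux_finite_of_fg_tors ℓ _ K ?_
    rintro ⟨x, v, hvL, rfl⟩
    refine Subtype.ext ?_
    show ((ℓ : ℤ_[ℓ]) ^ K) • N.mkQ v = 0
    rw [← map_smul, Submodule.mkQ_apply, Submodule.Quotient.mk_eq_zero]
    exact hLN v hvL
  have hfin : Finite {c : (ℚ_[ℓ] ⊗[ℤ_[ℓ]] M) ⧸ N // padicQuotEndo ℓ M φ c = c} := by
    refine Finite.of_injective (fun c => (⟨c.1, hfix c.1 c.2⟩ : L.map N.mkQ)) ?_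
    intro a b hab
    apply Subtype.ext
    have h3 := congrArg Subtype.val hab
    simpa using h3
  refine ⟨hfin, ?_⟩
  intro c hc hdiv
  have hkill : ∀ d, padicQuotEndo ℓ M φ d = d → ((ℓ : ℤ_[ℓ]) ^ K) • d = 0 := by
    intro d hd
    obtain ⟨v, hvL, rfl⟩ := hfix d hd
    rw [← map_smul, Submodule.mkQ_apply, Submodule.Quotient.mk_eq_zero]
    exact hLN v hvL
  have hn0 : (0 : ℤ) < (ℓ ^ K : ℕ) := by
    exact_mod_cast pow_pos (Fact.out : ℓ.Prime).pos K
  obtain ⟨d, hd, hnd⟩ := hdiv ((ℓ ^ K : ℕ) : ℤ) hn0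
  have h1 : ((ℓ ^ K : ℕ) : ℤ) • d = ((ℓ : ℤ_[ℓ]) ^ K) • d := by
    rw [natCast_zsmul, ← Nat.cast_smul_eq_nsmul ℤ_[ℓ]]
    push_cast
    rfl
  rw [← hnd, h1, hkill d hd]
end

section
/- Let ℓ be a prime, A and C abelian groups with C finitely generated, and for each n ≥ 1 let 0 → A/ℓⁿA → B_n → C[ℓⁿ] → 0 be a short exact sequence of abelian groups, together with transition homomorphisms B_{n+1} → B_n that are compatible with the canonical projections A/ℓ^{n+1}A → A/ℓⁿA and with the multiplication-by-ℓ maps C[ℓ^{n+1}] → C[ℓⁿ]. Then the induced map of inverse limits lim_n (A/ℓⁿA) → lim_n B_n is an isomorphism. -/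
/-!
Injectivity is immediate from the injectivity of each `A/ℓⁿA → Bₙ`. For surjectivity, a
compatible family `(bₙ)` maps to a family `cₙ ∈ C[ℓⁿ]` with `cₙ = ℓ • cₙ₊₁`, so
`cₙ = ℓ^N • c_{n+N}`. Since `C` is finitely generated, the chain `C[ℓⁿ]` stabilizes at some
`C[ℓ^N]`, which forces `cₙ = 0`; hence every `bₙ` comes from `A/ℓⁿA`, and by injectivity the
preimages form a compatible family.
-/

/-- Multiplication by the integer `k` as an additive endomorphism of `A`. -/
def intSmulHom (A : Type) [AddCommGroup A] (k : ℤ) : A →+ A where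
  toFun x := k • x
  map_zero' := smul_zero k
  map_add' a b := smul_add k a b

/-- The canonical projection `A/ℓ^{n+2}A → A/ℓ^{n+1}A`. -/
def modPowProj (A : Type) [AddCommGroup A] (ℓ : ℕ) (n : ℕ) :
    (A ⧸ (intSmulHom A ((ℓ : ℤ) ^ (n + 1 + 1))).range) →+
      (A ⧸ (intSmulHom A ((ℓ : ℤ) ^ (n + 1))).range) :=
  QuotientAddGroup.map _ _ (AddMonoidHom.id A) (by
    rintro _ ⟨y, rfl⟩
    refine ⟨(ℓ : ℤ) • y, ?_⟩
    show (ℓ : ℤ) ^ (n + 1) • (ℓ : ℤ) • y = (ℓ : ℤ) ^ (n + 1 + 1) • y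
    rw [smul_smul, ← pow_succ])

theorem AddGroup.FG.exists_pow_smul_eq_zero_of_pow_smul_eq_zero {C : Type*} [AddCommGroup C]
    (hC : AddGroup.FG C) (k : ℤ) :
    ∃ N : ℕ, ∀ (m : ℕ) (x : C), k ^ m • x = 0 → k ^ N • x = 0 := by
  have : Module.Finite ℤ C := Module.Finite.iff_addGroup_fg.mpr hC
  have mem_ker {m : ℕ} {x : C} :
      x ∈ LinearMap.ker ((k : Module.End ℤ C) ^ m) ↔ k ^ m • x = 0 := by
    rw [LinearMap.mem_ker, ← Int.cast_pow, Module.End.intCast_apply]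
  obtain ⟨N, hN⟩ := (LinearMap.eventually_iSup_ker_pow_eq (k : Module.End ℤ C)).exists
  refine ⟨N, fun m x hx => ?_⟩
  rw [← mem_ker, ← hN]
  exact Submodule.mem_iSup_of_mem m (mem_ker.mpr hx)

theorem eq_pow_smul_of_forall_eq_smul_succ {C : Type*} [AddCommGroup C] {k : ℤ} {c : ℕ → C}
    (hc : ∀ n, c n = k • c (n + 1)) (n j : ℕ) : c n = k ^ j • c (n + j) := by
  induction j with
  | zero => simp
  | succ j ih => rw [ih, hc (n + j), smul_smul, ← pow_succ, ← Nat.add_assoc]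

/-- The inverse limit of the torsion subgroups `C[kⁿ]` along multiplication by `k` vanishes. -/
theorem AddGroup.FG.eq_zero_of_forall_eq_smul_succ {C : Type*} [AddCommGroup C]
    (hC : AddGroup.FG C) {k : ℤ} {c : ℕ → C} (hc : ∀ n, c n = k • c (n + 1))
    (htors : ∀ n, ∃ m : ℕ, k ^ m • c n = 0) (n : ℕ) : c n = 0 := by
  obtain ⟨N, hN⟩ := hC.exists_pow_smul_eq_zero_of_pow_smul_eq_zero k
  obtain ⟨m, hm⟩ := htors (n + N)
  rw [eq_pow_smul_of_forall_eq_smul_succ hc n N]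
  exact hN m _ hm

theorem exists_compatible_preimage_of_forall_mem_range {X Y : ℕ → Type*}
    {s : ∀ n, X (n + 1) → X n} {t : ∀ n, Y (n + 1) → Y n} {ι : ∀ n, X n → Y n}
    (hι : ∀ n, Function.Injective (ι n)) (hcomm : ∀ n x, t n (ι (n + 1) x) = ι n (s n x))
    {b : ∀ n, Y n} (hb : ∀ n, t n (b (n + 1)) = b n) (hrange : ∀ n, b n ∈ Set.range (ι n)) :
    ∃ a : ∀ n, X n, (∀ n, s n (a (n + 1)) = a n) ∧ ∀ n, ι n (a n) = b n := by
  choose a ha using hrange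
  refine ⟨a, fun n => hι n ?_, ha⟩
  rw [← hcomm, ha, ha, hb]

/-- Let `ℓ` be a prime, `A` and `C` abelian groups with `C` finitely generated,
and for each `n ≥ 1` let `0 → A/ℓⁿA → Bₙ → C[ℓⁿ] → 0` be a short exact sequence
(here `Bₙ` comes with an injection `ι n` from `A/ℓⁿA`, a map `p n` to `C` whose
kernel is the image of `ι n` and whose image is the `ℓⁿ`-torsion of `C`),
together with transition maps `t n : B_{n+1} → Bₙ` compatible with the
canonical projections `A/ℓ^{n+1}A → A/ℓⁿA` and with multiplication by `ℓ` on
the torsion subgroups.  Then the induced map of inverse limits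
`lim_n A/ℓⁿA → lim_n Bₙ` is an isomorphism. -/
theorem limit_of_mod_pow_to_limit_bijective
    (ℓ : ℕ)
    (A C : Type) [AddCommGroup A] [AddCommGroup C] (hC : AddGroup.FG C)
    (B : ℕ → Type) [∀ n, AddCommGroup (B n)]
    (t : ∀ n, B (n + 1) →+ B n)
    (ι : ∀ n, (A ⧸ (intSmulHom A ((ℓ : ℤ) ^ (n + 1))).range) →+ B n)
    (p : ∀ n, B n →+ C)
    (hι : ∀ n, Function.Injective (ι n))
    (hexact : ∀ n, (ι n).range = (p n).ker)
    (hp : ∀ n, (p n).range = (intSmulHom C ((ℓ : ℤ) ^ (n + 1))).ker)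
    (hcomm₁ : ∀ n x, t n (ι (n + 1) x) = ι n (modPowProj A ℓ n x))
    (hcomm₂ : ∀ n b, p n (t n b) = (ℓ : ℤ) • p (n + 1) b) :
    Function.Bijective
      (fun a : {a : ∀ n, A ⧸ (intSmulHom A ((ℓ : ℤ) ^ (n + 1))).range //
          ∀ n, modPowProj A ℓ n (a (n + 1)) = a n} =>
        (⟨fun n => ι n (a.1 n), fun n => by rw [hcomm₁ n, a.2 n]⟩ :
          {b : ∀ n, B n // ∀ n, t n (b (n + 1)) = b n})) := by
  constructor
  · intro a a' h
    exact Subtype.ext <| funext fun n => hι n (congrFun (congrArg Subtype.val h) n)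
  · rintro ⟨b, hb⟩
    have hpb_zero : ∀ n, p n (b n) = 0 := by
      refine hC.eq_zero_of_forall_eq_smul_succ (k := ℓ) (fun n => ?_) (fun n => ⟨n + 1, ?_⟩)
      · rw [← hcomm₂, hb]
      · exact (hp n).le ⟨b n, rfl⟩
    obtain ⟨a, ha, hab⟩ := exists_compatible_preimage_of_forall_mem_range hι hcomm₁ hb
      fun n => (hexact n).ge (hpb_zero n)
    exact ⟨⟨a, ha⟩, Subtype.ext (funext hab)⟩
end
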